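/- arXiv:2402.03799 — 2 statements merged into one kernel-verified Lean document; each statement's English description precedes it below -/
import Mathlib

section
/- Let σ be a fixed-point-free involution on Fin(2n) (a chord diagram with n chords) and ρ the cyclic shift i ↦ i+1. If every chord of σ joins two adjacent points of the circle (i.e., σ(i) ∈ {i−1, i+1} for all i), then σ∘ρ has exactly n+1 cycles, so the Euler genus ε = 1 + n − f of the associated one-vertex orientable ribbon graph is 0. -/
/-! Call `i` a chord start when `σ i = i + 1`. Because chords join neighbours and `σ` is an
involution, exactly one of `i` and `i + 1` is a chord start (as soon as `2n > 2`), so the chord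
starts form one parity class. Hence `τ i = σ (i + 1)` is `i + 2` on one parity class and `i`
on the other: `τ` is the rotation of an `n`-gon extended by the identity, with one cycle plus
`n` fixed points. -/

open Equiv Equiv.Perm

namespace Equiv.Perm

theorem card_parts_partition_extendDomain {α β : Type*} [Fintype α] [DecidableEq α]
    [Fintype β] [DecidableEq β] {p : β → Prop} [DecidablePred p] (g : Perm α)
    (e : α ≃ Subtype p) :
    (g.extendDomain e).partition.parts.card =
      g.partition.parts.card + (Fintype.card β - Fintype.card α) := by
  have hαβ : Fintype.card α ≤ Fintype.card β :=
    (Fintype.card_congr e).trans_le (Fintype.card_subtype_le p)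
  have hsupp : g.support.card ≤ Fintype.card α := g.support.card_le_univ
  simp only [parts_partition, Multiset.card_add, Multiset.card_replicate,
    cycleType_extendDomain, card_support_extend_domain]
  omega

end Equiv.Perm

theorem card_parts_partition_finRotate {n : ℕ} (hn : 0 < n) :
    (finRotate n).partition.parts.card = 1 := by
  obtain rfl | hn2 : n = 1 ∨ 2 ≤ n := by omega
  · simp [finRotate_one, parts_partition, Perm.one_def]
  · simp [parts_partition, cycleType_finRotate_of_le hn2, support_finRotate_of_le hn2]

theorem val_finRotate {N : ℕ} (i : Fin N) : (finRotate N i).val = (i.val + 1) % N := by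
  have := i.neZero
  rw [finRotate_apply, Fin.val_add, Fin.val_one']
  simp

def finParityClassEquiv (n d : ℕ) (hd : d < 2) :
    Fin n ≃ {i : Fin (2 * n) // i.val % 2 = d} where
  toFun j := ⟨⟨2 * j + d, by omega⟩, by simp; omega⟩
  invFun i := ⟨i.1.val / 2, by omega⟩
  left_inv j := by ext; simp; omega
  right_inv i := by ext; simp; omega

theorem finRotate_extendDomain_finParityClassEquiv_apply (n d : ℕ) (hd : d < 2)
    (i : Fin (2 * n)) :
    (finRotate n).extendDomain (finParityClassEquiv n d hd) i =
      if i.val % 2 = d then finRotate (2 * n) (finRotate (2 * n) i) else i := by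
  split_ifs with h
  · rw [extendDomain_apply_subtype _ (finParityClassEquiv n d hd) h]
    ext
    simp only [finParityClassEquiv, coe_fn_mk, coe_fn_symm_mk, val_finRotate,
      Nat.mod_add_mod]
    have hi := i.isLt
    obtain hlt | heq : i.val / 2 + 1 < n ∨ i.val / 2 + 1 = n := by omega
    · rw [Nat.mod_eq_of_lt hlt, Nat.mod_eq_of_lt (by omega)]
      omega
    · rw [heq, Nat.mod_self, Nat.mod_eq_sub_mod (by omega), Nat.mod_eq_of_lt (by omega)]
      omega
  · exact extendDomain_apply_not_subtype _ (finParityClassEquiv n d hd) h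

theorem finRotate_finRotate_apply_ne {N : ℕ} (hN : 2 < N) (i : Fin N) :
    finRotate N (finRotate N i) ≠ i := by
  intro h
  have hval := congrArg Fin.val h
  rw [val_finRotate, val_finRotate, Nat.mod_add_mod] at hval
  have hi := i.isLt
  obtain hlt | hge : i.val + 2 < N ∨ N ≤ i.val + 2 := by omega
  · rw [Nat.mod_eq_of_lt hlt] at hval
    omega
  · rw [Nat.mod_eq_sub_mod hge, Nat.mod_eq_of_lt (by omega)] at hval
    omega

theorem iff_even_of_finRotate_iff_not {N : ℕ} [NeZero N] {p : Fin N → Prop}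
    (h : ∀ i, p (finRotate N i) ↔ ¬ p i) (i : Fin N) : p i ↔ (Even i.val ↔ p 0) := by
  suffices ∀ k (hk : k < N), p ⟨k, hk⟩ ↔ (Even k ↔ p 0) from this i i.isLt
  intro k
  induction k with
  | zero => simp
  | succ k ih =>
    intro hk
    have hrot : finRotate N ⟨k, by omega⟩ = ⟨k + 1, hk⟩ :=
      Fin.ext (by rw [val_finRotate, Nat.mod_eq_of_lt hk])
    rw [← hrot, h, ih, Nat.even_add_one]
    tauto

section ChordDiagram

variable {N : ℕ} {σ : Perm (Fin N)}

theorem apply_finRotate_eq_finRotate_iff (hinv : ∀ i, σ (σ i) = i)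
    (hadj : ∀ i, σ i = (finRotate N)⁻¹ i ∨ σ i = finRotate N i) {i : Fin N}
    (hi : finRotate N (finRotate N i) ≠ i) :
    σ (finRotate N i) = finRotate N (finRotate N i) ↔ ¬ σ i = finRotate N i := by
  constructor
  · intro h hi'
    have hback : σ (finRotate N i) = i := by rw [← hi', hinv]
    exact hi (hback ▸ h).symm
  · intro hi'
    rcases hadj (finRotate N i) with h | h
    · rw [Perm.inv_def, symm_apply_apply] at h
      have hstart := hinv (finRotate N i)
      rw [h] at hstart
      exact absurd hstart hi'
    · exact h

theorem exists_mul_finRotate_apply_eq_ite (hN : 2 < N) (hinv : ∀ i, σ (σ i) = i)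
    (hadj : ∀ i, σ i = (finRotate N)⁻¹ i ∨ σ i = finRotate N i) :
    ∃ d < 2, ∀ i, (σ * finRotate N) i =
      if i.val % 2 = d then finRotate N (finRotate N i) else i := by
  have : NeZero N := ⟨by omega⟩
  have halt (i : Fin N) :=
    apply_finRotate_eq_finRotate_iff hinv hadj (finRotate_finRotate_apply_ne hN i)
  have hpar (i : Fin N) : σ i = finRotate N i ↔ (Even i.val ↔ σ 0 = finRotate N 0) :=
    iff_even_of_finRotate_iff_not (p := fun j => σ j = finRotate N j) halt i
  let d := if σ 0 = finRotate N 0 then 1 else 0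
  have hstep (i : Fin N) : σ (finRotate N i) = finRotate N (finRotate N i) ↔ i.val % 2 = d := by
    rw [halt, hpar, Nat.even_iff]
    by_cases h0 : σ 0 = finRotate N 0
    · simp only [d, h0, if_true, iff_true]
      omega
    · simp only [d, h0, if_false, iff_false, not_not]
  refine ⟨d, by simp only [d]; split_ifs <;> omega, fun i => ?_⟩
  rw [Perm.mul_apply]
  split_ifs with hi
  · exact (hstep i).mpr hi
  · rcases hadj (finRotate N i) with h | h
    · rwa [Perm.inv_def, symm_apply_apply] at h
    · exact absurd ((hstep i).mp h) hi

end ChordDiagram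

theorem exists_mul_finRotate_eq_extendDomain {n : ℕ} (hn : 0 < n) {σ : Perm (Fin (2 * n))}
    (hinv : ∀ i, σ (σ i) = i)
    (hadj : ∀ i, σ i = (finRotate (2 * n))⁻¹ i ∨ σ i = finRotate (2 * n) i) :
    ∃ d, ∃ hd : d < 2,
      σ * finRotate (2 * n) = (finRotate n).extendDomain (finParityClassEquiv n d hd) := by
  obtain ⟨d, hd, hτ⟩ : ∃ d < 2, ∀ i, (σ * finRotate (2 * n)) i =
      if i.val % 2 = d then finRotate (2 * n) (finRotate (2 * n) i) else i := by
    obtain rfl | hn2 : n = 1 ∨ 2 ≤ n := by omega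
    · refine ⟨0, by omega, fun i => ?_⟩
      have hρρ : finRotate (2 * 1) (finRotate (2 * 1) i) = i := by fin_cases i <;> rfl
      rw [Perm.mul_apply, hρρ, ite_self]
      rcases hadj (finRotate (2 * 1) i) with h | h
      · rwa [Perm.inv_def, symm_apply_apply] at h
      · rwa [hρρ] at h
    · exact exists_mul_finRotate_apply_eq_ite (by omega) hinv hadj
  exact ⟨d, hd, Equiv.ext fun i => by
    rw [hτ, finRotate_extendDomain_finParityClassEquiv_apply]⟩

theorem adjacent_chords_planar_general (n : ℕ) (hn : 0 < n)
    (σ : Equiv.Perm (Fin (2 * n)))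
    (hinv : ∀ i, σ (σ i) = i)
    (hadj : ∀ i, σ i = (finRotate (2 * n))⁻¹ i ∨ σ i = finRotate (2 * n) i) :
    let τ : Equiv.Perm (Fin (2 * n)) := σ * finRotate (2 * n)
    let f : ℕ := τ.cycleType.card + (2 * n - τ.cycleType.sum)
    f = n + 1 ∧ 1 + n - f = 0 := by
  intro τ f
  have hf : f = (σ * finRotate (2 * n)).partition.parts.card := by
    simp only [f, τ, parts_partition, Multiset.card_add, Multiset.card_replicate,
      sum_cycleType, Fintype.card_fin]
  obtain ⟨d, hd, hτ⟩ := exists_mul_finRotate_eq_extendDomain hn hinv hadj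
  rw [hτ, card_parts_partition_extendDomain, card_parts_partition_finRotate hn] at hf
  simp only [Fintype.card_fin] at hf
  omega

/-- If every chord of a chord diagram (a fixed-point-free involution `σ` on `Fin (2n)`,
`n ≥ 1`) joins two adjacent points of the circle, then `σ ∘ ρ` has exactly `n + 1`
cycles, so the Euler genus `ε = 1 + n − f` of the associated one-vertex orientable
ribbon graph is `0`. -/
theorem adjacent_chords_planar (n : ℕ) (hn : 0 < n)
    (σ : Equiv.Perm (Fin (2 * n)))
    (hinv : ∀ i, σ (σ i) = i) (hfpf : ∀ i, σ i ≠ i)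
    (hadj : ∀ i, σ i = (finRotate (2 * n))⁻¹ i ∨ σ i = finRotate (2 * n) i) :
    let τ : Equiv.Perm (Fin (2 * n)) := σ * finRotate (2 * n)
    let f : ℕ := τ.cycleType.card + (2 * n - τ.cycleType.sum)
    f = n + 1 ∧ 1 + n - f = 0 :=
  adjacent_chords_planar_general n hn σ hinv hadj
end

section
/- Let σ be a fixed-point-free involution on Fin(2n) and ρ the cyclic shift. The parity of the number of cycles of σ∘ρ equals the parity of n+1; i.e., (number of cycles of σ∘ρ) + n + 1 is even. -/
open Equiv Equiv.Perm

/-- For a fixed-point-free involution `σ` on `Fin (2n)`, `n ≥ 1`, the number of cycles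
of `σ ∘ ρ` (with `ρ` the cyclic shift) has the same parity as `n + 1`. -/
theorem cycle_count_parity (n : ℕ) (hn : 0 < n)
    (σ : Equiv.Perm (Fin (2 * n)))
    (hinv : ∀ i, σ (σ i) = i) (hfpf : ∀ i, σ i ≠ i) :
    let τ : Equiv.Perm (Fin (2 * n)) := σ * finRotate (2 * n)
    let f : ℕ := τ.cycleType.card + (2 * n - τ.cycleType.sum)
    Even (f + n + 1) := by
  intro τ f
  have hsq : σ ^ 2 = 1 := by
    ext i; simp [pow_succ, hinv i]
  -- every cycle length of σ is 2
  have hmem : ∀ m ∈ σ.cycleType, m = 2 := by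
    intro m hm
    have h1 : m ∣ 2 := (dvd_of_mem_cycleType hm).trans (orderOf_dvd_of_pow_eq_one hsq)
    have h2 : 2 ≤ m := two_le_of_mem_cycleType hm
    exact le_antisymm (Nat.le_of_dvd two_pos h1) h2
  have hsupp : σ.support = Finset.univ := by
    ext i; simp [Equiv.Perm.mem_support, hfpf i]
  have hsum : σ.cycleType.sum = 2 * n := by
    rw [Equiv.Perm.sum_cycleType, hsupp, Finset.card_univ, Fintype.card_fin]
  have hcard : Multiset.card σ.cycleType = n := by
    have h := Multiset.eq_replicate_card.2 hmem
    rw [h, Multiset.sum_replicate, smul_eq_mul] at hsum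
    omega
  have hsignσ : Equiv.Perm.sign σ = (-1 : ℤˣ) ^ n := by
    rw [Equiv.Perm.sign_of_cycleType, hsum, hcard, pow_add]
    simp [pow_mul]
  have hrot : Equiv.Perm.sign (finRotate (2 * n)) = -1 := by
    have h2n : 2 * n = (2 * n - 1) + 1 := by omega
    rw [h2n, sign_finRotate]
    have : ¬ Even (2 * n - 1) := by
      rw [Nat.even_sub (by omega)]; simp
    exact Odd.neg_one_pow (Nat.not_even_iff_odd.1 this)
  have hsignτ : Equiv.Perm.sign τ = (-1 : ℤˣ) ^ (n + 1) := by
    rw [show τ = σ * finRotate (2 * n) from rfl, map_mul, hsignσ, hrot, pow_succ]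
  have key : (-1 : ℤˣ) ^ (τ.cycleType.sum + Multiset.card τ.cycleType) = (-1 : ℤˣ) ^ (n + 1) := by
    rw [← Equiv.Perm.sign_of_cycleType, hsignτ]
  have hpar : Even (τ.cycleType.sum + Multiset.card τ.cycleType + (n + 1)) := by
    rw [← neg_one_pow_eq_one_iff_even (R := ℤˣ) (by decide)]
    rw [pow_add, key, ← pow_add, ← two_mul, pow_mul]
    simp
  have hle : τ.cycleType.sum ≤ 2 * n := by
    rw [Equiv.Perm.sum_cycleType]
    exact (Finset.card_le_card (Finset.subset_univ _)).trans (by simp)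
  rw [Nat.even_iff] 
  rw [Nat.even_iff] at hpar
  show (Multiset.card τ.cycleType + (2 * n - τ.cycleType.sum) + n + 1) % 2 = 0
  omega
end
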